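/- arXiv:2601.07341 — 2 statements merged into one kernel-verified Lean document; each statement's English description precedes it below -/
import Mathlib

section
/- Let d ≥ 2, 0 ≤ β < (d−1)/2 and γ > 0. There is a constant C depending only on d, β, γ with the following property. If ω ⊆ ℝ^d is an H^{d−1}-measurable set with 0 < Θ[ω] < ∞ and H^{d−1}(ω) < ∞, then for every x ∈ ℝ^d and every τ > 0: ∫_ω (|x−y|²/τ)^{−β} · e^{−γ|x−y|²/τ} dH^{d−1}(y) ≤ C · Θ[ω] · min{ (H^{d−1}(ω)/Θ[ω])^{1 − 2β/(d−1)} · τ^β , τ^{(d−1)/2} }. -/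
open MeasureTheory Metric Set
open scoped ENNReal

set_option maxHeartbeats 1000000

/-- The density bound `Θ[ω] = sup_{r>0, z} H^{d−1}(ω ∩ B_r(z)) / r^{d−1}` (valued in `ℝ≥0∞`). -/
noncomputable def Theta (d : ℕ) (ω : Set (EuclideanSpace ℝ (Fin d))) : ℝ≥0∞ :=
  ⨆ (r : ℝ) (_ : 0 < r) (z : EuclideanSpace ℝ (Fin d)),
    μH[(d:ℝ) - 1] (ω ∩ Metric.ball z r) / ENNReal.ofReal (r ^ (d - 1))

theorem theta_ball (d : ℕ) (ω : Set (EuclideanSpace ℝ (Fin d)))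
    (z : EuclideanSpace ℝ (Fin d)) {r : ℝ} (hr : 0 < r) :
    μH[(d:ℝ) - 1] (ω ∩ Metric.ball z r) ≤ Theta d ω * ENNReal.ofReal (r ^ (d - 1)) := by
  have h0 : ENNReal.ofReal (r ^ (d - 1)) ≠ 0 := by
    rw [Ne, ENNReal.ofReal_eq_zero, not_le]; positivity
  have h : μH[(d:ℝ) - 1] (ω ∩ Metric.ball z r) / ENNReal.ofReal (r ^ (d - 1)) ≤ Theta d ω :=
    le_iSup_of_le r (le_iSup_of_le hr (le_iSup_of_le z le_rfl))
  exact (ENNReal.div_le_iff_le_mul (Or.inl h0) (Or.inl ENNReal.ofReal_ne_top)).mp h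

theorem f_mono {β γ τ a t : ℝ} (hβ0 : 0 ≤ β) (hγ : 0 < γ) (hτ : 0 < τ)
    (ha : 0 < a) (hat : a ≤ t) :
    (t ^ 2 / τ) ^ (-β) * Real.exp (-γ * t ^ 2 / τ)
      ≤ (a ^ 2 / τ) ^ (-β) * Real.exp (-γ * a ^ 2 / τ) := by
  have h2 : a ^ 2 ≤ t ^ 2 := by nlinarith
  have h1 : (t ^ 2 / τ) ^ (-β) ≤ (a ^ 2 / τ) ^ (-β) :=
    Real.rpow_le_rpow_of_nonpos (by positivity) (by gcongr) (neg_nonpos.mpr hβ0)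
  have h3 : Real.exp (-γ * t ^ 2 / τ) ≤ Real.exp (-γ * a ^ 2 / τ) := by
    rw [Real.exp_le_exp, div_le_div_iff₀ hτ hτ]
    nlinarith [mul_le_mul_of_nonneg_right (mul_le_mul_of_nonneg_left h2 hγ.le) hτ.le]
  exact mul_le_mul h1 h3 (Real.exp_pos _).le (Real.rpow_nonneg (by positivity) _)

theorem setLIntegral_ofReal_le {α : Type*} [MeasurableSpace α] (μ : Measure α) {S : Set α}
    (hS : MeasurableSet S) {f : α → ℝ} {c : ℝ}
    (hc : ∀ y ∈ S, f y ≤ c) :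
    ∫⁻ y in S, ENNReal.ofReal (f y) ∂μ ≤ ENNReal.ofReal c * μ S := by
  calc ∫⁻ y in S, ENNReal.ofReal (f y) ∂μ
      ≤ ∫⁻ _ in S, ENNReal.ofReal c ∂μ :=
        setLIntegral_mono' hS fun y hy => ENNReal.ofReal_le_ofReal (hc y hy)
    _ = ENNReal.ofReal c * μ S := setLIntegral_const S _

theorem two_rpow_eq_four_rpow (β : ℝ) : (2:ℝ) ^ (2 * β) = (4:ℝ) ^ β := by
  have h42 : (2:ℝ) ^ (2:ℝ) = 4 := by
    have := Real.rpow_natCast (2:ℝ) 2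
    norm_num at this
    linarith
  rw [Real.rpow_mul (by norm_num : (0:ℝ) ≤ 2), h42]

theorem ratio_lt_one {d : ℕ} (hd : 2 ≤ d) {β : ℝ} (hβ : β < ((d:ℝ) - 1) / 2) :
    (4:ℝ) ^ β / 2 ^ (d - 1) < 1 := by
  rw [div_lt_one (by positivity)]
  rw [← two_rpow_eq_four_rpow]
  have hcast : ((d:ℝ) - 1) = ((d - 1 : ℕ) : ℝ) := by
    rw [Nat.cast_sub (by omega)]; norm_num
  calc (2:ℝ) ^ (2 * β) < 2 ^ ((d:ℝ) - 1) := by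
        apply Real.rpow_lt_rpow_left_iff (by norm_num : (1:ℝ) < 2) |>.mpr
        linarith
    _ = 2 ^ (d - 1 : ℕ) := by rw [hcast, Real.rpow_natCast]

theorem pow_rpow_comm (x : ℝ) (hx : 0 ≤ x) (b : ℝ) (n : ℕ) :
    ((x ^ n : ℝ)) ^ b = (x ^ b) ^ n := by
  rw [← Real.rpow_natCast x n, ← Real.rpow_mul hx, mul_comm, Real.rpow_mul hx,
    Real.rpow_natCast]

theorem near_bound (d : ℕ) (hd : 2 ≤ d) (β γ : ℝ) (hβ0 : 0 ≤ β) (hβ : β < ((d:ℝ) - 1) / 2)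
    (hγ : 0 < γ) (ω : Set (EuclideanSpace ℝ (Fin d))) (hω : MeasurableSet ω)
    (x : EuclideanSpace ℝ (Fin d)) {τ r : ℝ} (hτ : 0 < τ) (hr : 0 < r) :
    ∫⁻ y in ω ∩ ball x r,
        ENNReal.ofReal ((‖x - y‖ ^ 2 / τ) ^ (-β) * Real.exp (-γ * ‖x - y‖ ^ 2 / τ))
        ∂μH[(d:ℝ) - 1]
      ≤ Theta d ω * ENNReal.ofReal
          ((4 ^ β * (1 - (4:ℝ) ^ β / 2 ^ (d - 1))⁻¹) * ((τ / r ^ 2) ^ β * r ^ (d - 1))) := by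
  classical
  set s : ℝ := (4:ℝ) ^ β / 2 ^ (d - 1) with hs_def
  have hs0 : 0 < s := by positivity
  have hs1 : s < 1 := ratio_lt_one hd hβ
  have h1s : 0 < 1 - s := by linarith
  have h4β : (1:ℝ) ≤ 4 ^ β := Real.one_le_rpow (by norm_num) hβ0
  have hC1 : (1:ℝ) ≤ 4 ^ β * (1 - s)⁻¹ := by
    have h2 : (1:ℝ) ≤ (1 - s)⁻¹ := by
      rw [le_inv_comm₀ one_pos h1s]
      linarith
    nlinarith
  rcases eq_or_lt_of_le hβ0 with hb | hb
  · -- β = 0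
    have hβ' : β = 0 := hb.symm
    have e1 : ∀ y : EuclideanSpace ℝ (Fin d), (‖x - y‖ ^ 2 / τ) ^ (-β) = 1 := by
      intro y; rw [hβ', neg_zero, Real.rpow_zero]
    have e2 : (τ / r ^ 2) ^ β = 1 := by rw [hβ', Real.rpow_zero]
    calc ∫⁻ y in ω ∩ ball x r,
          ENNReal.ofReal ((‖x - y‖ ^ 2 / τ) ^ (-β) * Real.exp (-γ * ‖x - y‖ ^ 2 / τ))
          ∂μH[(d:ℝ) - 1]
        ≤ ENNReal.ofReal 1 * μH[(d:ℝ) - 1] (ω ∩ ball x r) := by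
          refine setLIntegral_ofReal_le _ (hω.inter measurableSet_ball) fun y hy => ?_
          rw [e1, one_mul, Real.exp_le_one_iff]
          apply div_nonpos_of_nonpos_of_nonneg _ hτ.le
          nlinarith [sq_nonneg ‖x - y‖]
      _ ≤ 1 * (Theta d ω * ENNReal.ofReal (r ^ (d - 1))) := by
          rw [ENNReal.ofReal_one]
          gcongr
          exact theta_ball d ω x hr
      _ ≤ Theta d ω * ENNReal.ofReal
            ((4 ^ β * (1 - s)⁻¹) * ((τ / r ^ 2) ^ β * r ^ (d - 1))) := by
          rw [one_mul, e2, one_mul]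
          gcongr
          nlinarith [pow_pos hr (d - 1)]
  · -- 0 < β
    set ν : Measure (EuclideanSpace ℝ (Fin d)) := μH[(d:ℝ) - 1] with hν
    set g : EuclideanSpace ℝ (Fin d) → ℝ≥0∞ := fun y =>
      ENNReal.ofReal ((‖x - y‖ ^ 2 / τ) ^ (-β) * Real.exp (-γ * ‖x - y‖ ^ 2 / τ)) with hg
    set A : ℕ → Set (EuclideanSpace ℝ (Fin d)) := fun k =>
      ω ∩ (ball x (r * 2⁻¹ ^ k) \ ball x (r * 2⁻¹ ^ (k + 1))) with hA
    have hcover : ω ∩ ball x r ⊆ (ω ∩ ball x r ∩ {x}) ∪ ⋃ k, A k := by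
      intro y hy
      by_cases hxy : y = x
      · exact Or.inl ⟨hy, hxy⟩
      · right
        have hdist : 0 < dist y x := dist_pos.mpr hxy
        have hlt : dist y x < r := mem_ball.mp hy.2
        obtain ⟨n, hn⟩ := exists_pow_lt_of_lt_one (div_pos hdist hr)
          (by norm_num : (2:ℝ)⁻¹ < 1)
        have hP : ∃ k, r * 2⁻¹ ^ (k + 1) ≤ dist y x := by
          refine ⟨n, ?_⟩
          have h1 : (2:ℝ)⁻¹ ^ (n + 1) ≤ 2⁻¹ ^ n := by
            apply pow_le_pow_of_le_one (by norm_num) (by norm_num)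
            omega
          have h2 : r * 2⁻¹ ^ n < dist y x := by
            rw [mul_comm, ← lt_div_iff₀ hr]
            exact hn
          nlinarith
        refine mem_iUnion.mpr ⟨Nat.find hP, hy.1, ?_, ?_⟩
        · rw [mem_ball]
          rcases Nat.eq_zero_or_pos (Nat.find hP) with h0 | hpos
          · rw [h0]; simpa using hlt
          · obtain ⟨m, hm⟩ := Nat.exists_eq_succ_of_ne_zero hpos.ne'
            have := Nat.find_min hP (by omega : m < Nat.find hP)
            rw [hm]
            push_neg at this
            exact this
        · rw [mem_ball, not_lt]
          exact Nat.find_spec hP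
    have hmono : ∫⁻ y in ω ∩ ball x r, g y ∂ν ≤
        (∫⁻ y in ω ∩ ball x r ∩ {x}, g y ∂ν) + ∑' k, ∫⁻ y in A k, g y ∂ν := by
      refine le_trans (lintegral_mono_set hcover) ?_
      refine le_trans (lintegral_union_le _ _ _) ?_
      gcongr
      exact lintegral_iUnion_le _ _
    have hsing : ∫⁻ y in ω ∩ ball x r ∩ {x}, g y ∂ν = 0 := by
      have hle : ∫⁻ y in ω ∩ ball x r ∩ {x}, g y ∂ν ≤
          ENNReal.ofReal 0 * ν (ω ∩ ball x r ∩ {x}) := by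
        refine setLIntegral_ofReal_le ν
          ((hω.inter measurableSet_ball).inter (measurableSet_singleton x)) fun y hy => ?_
        have hyx : y = x := hy.2
        rw [hyx]
        simp [Real.zero_rpow (neg_ne_zero.mpr hb.ne')]
      simpa using hle
    set K : ℝ := (τ / r ^ 2) ^ β * 4 ^ β * r ^ (d - 1) with hK
    have hAk : ∀ k : ℕ, ∫⁻ y in A k, g y ∂ν ≤
        Theta d ω * ENNReal.ofReal (K * s ^ k) := by
      intro k
      have ha : 0 < r * 2⁻¹ ^ (k + 1) := by positivity
      have hw : ((r * 2⁻¹ ^ (k + 1)) ^ 2 / τ) ^ (-β) * (r * 2⁻¹ ^ k) ^ (d - 1)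
          = K * s ^ k := by
        have e1 : (r * 2⁻¹ ^ (k + 1)) ^ 2 / τ = (r ^ 2 / τ) * (4:ℝ)⁻¹ ^ (k + 1) := by
          rw [mul_pow, show ((2:ℝ)⁻¹ ^ (k + 1)) ^ 2 = (4:ℝ)⁻¹ ^ (k + 1) by
            rw [pow_right_comm]; norm_num]
          ring
        have h2 : ((r ^ 2 / τ) : ℝ) ^ (-β) = (τ / r ^ 2) ^ β := by
          rw [Real.rpow_neg (by positivity), ← Real.inv_rpow (by positivity), inv_div]
        have h3 : ((4:ℝ)⁻¹ ^ (k + 1)) ^ (-β) = ((4:ℝ) ^ β) ^ (k + 1) := by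
          rw [inv_pow, Real.inv_rpow (by positivity), Real.rpow_neg (by positivity),
            inv_inv, pow_rpow_comm 4 (by norm_num) β (k + 1)]
        rw [e1, Real.mul_rpow (by positivity) (by positivity), h2, h3, hK, hs_def]
        ring_nf
        simp only [one_div]
      have hpt : ∀ y ∈ A k, (‖x - y‖ ^ 2 / τ) ^ (-β) * Real.exp (-γ * ‖x - y‖ ^ 2 / τ)
          ≤ ((r * 2⁻¹ ^ (k + 1)) ^ 2 / τ) ^ (-β) := by
        intro y hy
        have hge : r * 2⁻¹ ^ (k + 1) ≤ ‖x - y‖ := by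
          have h := hy.2.2
          rw [mem_ball, not_lt] at h
          rwa [dist_comm, dist_eq_norm] at h
        calc (‖x - y‖ ^ 2 / τ) ^ (-β) * Real.exp (-γ * ‖x - y‖ ^ 2 / τ)
            ≤ ((r * 2⁻¹ ^ (k + 1)) ^ 2 / τ) ^ (-β)
              * Real.exp (-γ * (r * 2⁻¹ ^ (k + 1)) ^ 2 / τ) := f_mono hβ0 hγ hτ ha hge
          _ ≤ ((r * 2⁻¹ ^ (k + 1)) ^ 2 / τ) ^ (-β) * 1 := by
              refine mul_le_mul_of_nonneg_left ?_ (by positivity)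
              rw [Real.exp_le_one_iff]
              apply div_nonpos_of_nonpos_of_nonneg _ hτ.le
              nlinarith [sq_nonneg (r * 2⁻¹ ^ (k + 1))]
          _ = ((r * 2⁻¹ ^ (k + 1)) ^ 2 / τ) ^ (-β) := mul_one _
      calc ∫⁻ y in A k, g y ∂ν
          ≤ ENNReal.ofReal (((r * 2⁻¹ ^ (k + 1)) ^ 2 / τ) ^ (-β)) * ν (A k) :=
            setLIntegral_ofReal_le ν (hω.inter (measurableSet_ball.diff measurableSet_ball)) hpt
        _ ≤ ENNReal.ofReal (((r * 2⁻¹ ^ (k + 1)) ^ 2 / τ) ^ (-β))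
              * (Theta d ω * ENNReal.ofReal ((r * 2⁻¹ ^ k) ^ (d - 1))) := by
            gcongr
            calc ν (A k) ≤ ν (ω ∩ ball x (r * 2⁻¹ ^ k)) := by
                  apply measure_mono
                  intro y hy
                  exact ⟨hy.1, hy.2.1⟩
              _ ≤ _ := theta_ball d ω x (by positivity)
        _ = Theta d ω * (ENNReal.ofReal (((r * 2⁻¹ ^ (k + 1)) ^ 2 / τ) ^ (-β))
              * ENNReal.ofReal ((r * 2⁻¹ ^ k) ^ (d - 1))) := by ring
        _ = Theta d ω * ENNReal.ofReal (K * s ^ k) := by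
            rw [← ENNReal.ofReal_mul (by positivity), hw]
    have hsummable : Summable (fun k : ℕ => K * s ^ k) :=
      (summable_geometric_of_lt_one hs0.le hs1).mul_left K
    calc ∫⁻ y in ω ∩ ball x r, g y ∂ν
        ≤ (∫⁻ y in ω ∩ ball x r ∩ {x}, g y ∂ν) + ∑' k, ∫⁻ y in A k, g y ∂ν := hmono
      _ ≤ 0 + ∑' k, Theta d ω * ENNReal.ofReal (K * s ^ k) := by
          rw [hsing]
          exact add_le_add le_rfl (ENNReal.tsum_le_tsum hAk)
      _ = Theta d ω * ENNReal.ofReal (∑' k, K * s ^ k) := by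
          rw [zero_add, ENNReal.tsum_mul_left, ← ENNReal.ofReal_tsum_of_nonneg
            (fun k => by positivity) hsummable]
      _ = Theta d ω * ENNReal.ofReal (K * (1 - s)⁻¹) := by
          rw [tsum_mul_left, tsum_geometric_of_lt_one hs0.le hs1]
      _ = Theta d ω * ENNReal.ofReal
            ((4 ^ β * (1 - s)⁻¹) * ((τ / r ^ 2) ^ β * r ^ (d - 1))) := by
          congr 1
          rw [hK]
          ring


theorem far_bound (d : ℕ) (hd : 2 ≤ d) (β γ : ℝ) (hβ0 : 0 ≤ β) (hγ : 0 < γ)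
    (ω : Set (EuclideanSpace ℝ (Fin d))) (hω : MeasurableSet ω)
    (x : EuclideanSpace ℝ (Fin d)) {τ : ℝ} (hτ : 0 < τ) :
    ∫⁻ y in ω \ ball x (Real.sqrt τ),
        ENNReal.ofReal ((‖x - y‖ ^ 2 / τ) ^ (-β) * Real.exp (-γ * ‖x - y‖ ^ 2 / τ))
        ∂μH[(d:ℝ) - 1]
      ≤ Theta d ω * ENNReal.ofReal
          ((2 ^ (d - 1) * ((d.factorial : ℝ) / γ ^ d) * 2) * Real.sqrt τ ^ (d - 1)) := by
  classical
  set ν : Measure (EuclideanSpace ℝ (Fin d)) := μH[(d:ℝ) - 1] with hν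
  set g : EuclideanSpace ℝ (Fin d) → ℝ≥0∞ := fun y =>
    ENNReal.ofReal ((‖x - y‖ ^ 2 / τ) ^ (-β) * Real.exp (-γ * ‖x - y‖ ^ 2 / τ)) with hg
  set q : ℝ := Real.sqrt τ with hq
  have hq0 : 0 < q := Real.sqrt_pos.mpr hτ
  have hq2 : q ^ 2 = τ := Real.sq_sqrt hτ.le
  set B : ℕ → Set (EuclideanSpace ℝ (Fin d)) := fun k =>
    ω ∩ (ball x (q * 2 ^ (k + 1)) \ ball x (q * 2 ^ k)) with hB
  have hcover : ω \ ball x q ⊆ ⋃ k, B k := by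
    intro y hy
    have hge : q ≤ dist y x := by
      have h := hy.2; rw [mem_ball, not_lt] at h; exact h
    obtain ⟨n, hn⟩ := pow_unbounded_of_one_lt (dist y x / q) (by norm_num : (1:ℝ) < 2)
    have hP : ∃ k, dist y x < q * 2 ^ (k + 1) := by
      refine ⟨n, ?_⟩
      rw [div_lt_iff₀ hq0] at hn
      calc dist y x < 2 ^ n * q := hn
        _ ≤ q * 2 ^ (n + 1) := by
            rw [pow_succ]
            nlinarith [mul_pos hq0 (pow_pos (by norm_num : (0:ℝ) < 2) n)]
    refine mem_iUnion.mpr ⟨Nat.find hP, hy.1, mem_ball.mpr (Nat.find_spec hP), ?_⟩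
    rw [mem_ball, not_lt]
    rcases Nat.eq_zero_or_pos (Nat.find hP) with h0 | hpos
    · rw [h0]; simpa using hge
    · obtain ⟨m, hm⟩ := Nat.exists_eq_succ_of_ne_zero hpos.ne'
      have hmin := Nat.find_min hP (by omega : m < Nat.find hP)
      push_neg at hmin
      rw [hm]
      exact hmin
  set K : ℝ := 2 ^ (d - 1) * ((d.factorial : ℝ) / γ ^ d) * q ^ (d - 1) with hK
  have hBk : ∀ k : ℕ, ∫⁻ y in B k, g y ∂ν ≤
      Theta d ω * ENNReal.ofReal (K * 2⁻¹ ^ k) := by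
    intro k
    have ha : 0 < q * 2 ^ k := by positivity
    have hak : (q * 2 ^ k) ^ 2 / τ = 4 ^ k := by
      rw [mul_pow, hq2, show ((2:ℝ) ^ k) ^ 2 = (4:ℝ) ^ k by rw [pow_right_comm]; norm_num,
        mul_comm, mul_div_assoc, div_self hτ.ne', mul_one]
    have hpt : ∀ y ∈ B k, (‖x - y‖ ^ 2 / τ) ^ (-β) * Real.exp (-γ * ‖x - y‖ ^ 2 / τ)
        ≤ Real.exp (-(γ * 4 ^ k)) := by
      intro y hy
      have hge : q * 2 ^ k ≤ ‖x - y‖ := by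
        have h := hy.2.2
        rw [mem_ball, not_lt] at h
        rwa [dist_comm, dist_eq_norm] at h
      calc (‖x - y‖ ^ 2 / τ) ^ (-β) * Real.exp (-γ * ‖x - y‖ ^ 2 / τ)
          ≤ ((q * 2 ^ k) ^ 2 / τ) ^ (-β) * Real.exp (-γ * (q * 2 ^ k) ^ 2 / τ) :=
            f_mono hβ0 hγ hτ ha hge
        _ ≤ 1 * Real.exp (-(γ * 4 ^ k)) := by
            have he : -γ * (q * 2 ^ k) ^ 2 / τ = -(γ * 4 ^ k) := by
              rw [mul_div_assoc, hak]; ring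
            rw [he]
            refine mul_le_mul_of_nonneg_right ?_ (Real.exp_pos _).le
            rw [hak]
            exact Real.rpow_le_one_of_one_le_of_nonpos
              (one_le_pow₀ (by norm_num)) (neg_nonpos.mpr hβ0)
        _ = Real.exp (-(γ * 4 ^ k)) := one_mul _
    have hexp : Real.exp (-(γ * 4 ^ k)) ≤ (d.factorial : ℝ) / (γ ^ d * 4 ^ (k * d)) := by
      have hz : 0 < γ * 4 ^ k := by positivity
      have h := Real.pow_div_factorial_le_exp _ hz.le d
      have h2 : (0:ℝ) < (γ * 4 ^ k) ^ d / d.factorial := by positivity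
      have h3 := inv_anti₀ h2 h
      rw [Real.exp_neg]
      calc (Real.exp (γ * 4 ^ k))⁻¹ ≤ ((γ * 4 ^ k) ^ d / d.factorial)⁻¹ := h3
        _ = (d.factorial : ℝ) / (γ * 4 ^ k) ^ d := by rw [inv_div]
        _ = (d.factorial : ℝ) / (γ ^ d * 4 ^ (k * d)) := by rw [mul_pow, ← pow_mul]
    have hpow : (2:ℝ) ^ ((k + 1) * (d - 1)) * 2 ^ k ≤ 2 ^ (d - 1) * 4 ^ (k * d) := by
      have h4 : (4:ℝ) ^ (k * d) = 2 ^ (2 * (k * d)) := by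
        rw [show (4:ℝ) = 2 ^ 2 by norm_num, ← pow_mul]
      rw [h4, ← pow_add, ← pow_add]
      apply pow_le_pow_right₀ (by norm_num : (1:ℝ) ≤ 2)
      obtain ⟨e, rfl⟩ : ∃ e, d = e + 1 := ⟨d - 1, by omega⟩
      simp only [Nat.add_sub_cancel]
      nlinarith [Nat.zero_le (k * e)]
    have hwk : Real.exp (-(γ * 4 ^ k)) * (q * 2 ^ (k + 1)) ^ (d - 1) ≤ K * 2⁻¹ ^ k := by
      calc Real.exp (-(γ * 4 ^ k)) * (q * 2 ^ (k + 1)) ^ (d - 1)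
          ≤ ((d.factorial : ℝ) / (γ ^ d * 4 ^ (k * d))) * (q * 2 ^ (k + 1)) ^ (d - 1) :=
            mul_le_mul_of_nonneg_right hexp (by positivity)
        _ = ((d.factorial : ℝ) / γ ^ d) * q ^ (d - 1) *
              (2 ^ ((k + 1) * (d - 1)) / 4 ^ (k * d)) := by
            rw [mul_pow, ← pow_mul]
            field_simp
        _ ≤ ((d.factorial : ℝ) / γ ^ d) * q ^ (d - 1) * (2 ^ (d - 1) * 2⁻¹ ^ k) := by
            refine mul_le_mul_of_nonneg_left ?_ (by positivity)
            rw [show (2:ℝ) ^ (d - 1) * 2⁻¹ ^ k = 2 ^ (d - 1) / 2 ^ k by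
              rw [inv_pow]; ring]
            rw [div_le_div_iff₀ (by positivity) (by positivity)]
            exact hpow
        _ = K * 2⁻¹ ^ k := by rw [hK]; ring
    calc ∫⁻ y in B k, g y ∂ν
        ≤ ENNReal.ofReal (Real.exp (-(γ * 4 ^ k))) * ν (B k) :=
          setLIntegral_ofReal_le ν (hω.inter (measurableSet_ball.diff measurableSet_ball)) hpt
      _ ≤ ENNReal.ofReal (Real.exp (-(γ * 4 ^ k)))
            * (Theta d ω * ENNReal.ofReal ((q * 2 ^ (k + 1)) ^ (d - 1))) := by
          gcongr
          calc ν (B k) ≤ ν (ω ∩ ball x (q * 2 ^ (k + 1))) := by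
                apply measure_mono; intro y hy; exact ⟨hy.1, hy.2.1⟩
            _ ≤ _ := theta_ball d ω x (by positivity)
      _ = Theta d ω * (ENNReal.ofReal (Real.exp (-(γ * 4 ^ k)))
            * ENNReal.ofReal ((q * 2 ^ (k + 1)) ^ (d - 1))) := by ring
      _ ≤ Theta d ω * ENNReal.ofReal (K * 2⁻¹ ^ k) := by
          gcongr
          rw [← ENNReal.ofReal_mul (Real.exp_pos _).le]
          exact ENNReal.ofReal_le_ofReal hwk
  have hsummable : Summable (fun k : ℕ => K * 2⁻¹ ^ k) :=
    (summable_geometric_of_lt_one (by norm_num) (by norm_num)).mul_left K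
  calc ∫⁻ y in ω \ ball x q, g y ∂ν ≤ ∫⁻ y in ⋃ k, B k, g y ∂ν := lintegral_mono_set hcover
    _ ≤ ∑' k, ∫⁻ y in B k, g y ∂ν := lintegral_iUnion_le _ _
    _ ≤ ∑' k, Theta d ω * ENNReal.ofReal (K * 2⁻¹ ^ k) := ENNReal.tsum_le_tsum hBk
    _ = Theta d ω * ENNReal.ofReal (∑' k, K * 2⁻¹ ^ k) := by
        rw [ENNReal.tsum_mul_left, ← ENNReal.ofReal_tsum_of_nonneg
          (fun k => by positivity) hsummable]
    _ = Theta d ω * ENNReal.ofReal (K * 2) := by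
        rw [tsum_mul_left, tsum_geometric_of_lt_one (by norm_num) (by norm_num)]
        norm_num
    _ = Theta d ω * ENNReal.ofReal
          ((2 ^ (d - 1) * ((d.factorial : ℝ) / γ ^ d) * 2) * q ^ (d - 1)) := by
        congr 1
        rw [hK]
        ring

/-- Step 2 of the proof of Theorem `neumann bvp Lp estimates`: for `0 ≤ β < (d−1)/2` and
`γ > 0`, the integral of `h_{β,γ}(|x−y|²/τ)` over `ω` against `H^{d−1}` is controlled by
`Θ[ω] min{(H^{d−1}(ω)/Θ[ω])^{1−2β/(d−1)} τ^β, τ^{(d−1)/2}}`. -/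
theorem stmt_17 (d : ℕ) (hd : 2 ≤ d) (β γ : ℝ)
    (hβ0 : 0 ≤ β) (hβ : β < ((d:ℝ) - 1) / 2) (hγ : 0 < γ) :
    ∃ C : ℝ, 0 < C ∧
      ∀ ω : Set (EuclideanSpace ℝ (Fin d)), MeasurableSet ω →
      0 < Theta d ω → Theta d ω < ⊤ → μH[(d:ℝ) - 1] ω < ⊤ →
      ∀ (x : EuclideanSpace ℝ (Fin d)) (τ : ℝ), 0 < τ →
      (∫ y in ω, (‖x - y‖ ^ 2 / τ) ^ (-β)
          * Real.exp (-γ * ‖x - y‖ ^ 2 / τ) ∂(μH[(d:ℝ) - 1]))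
        ≤ C * (Theta d ω).toReal *
            min (((μH[(d:ℝ) - 1] ω).toReal / (Theta d ω).toReal)
                    ^ (1 - 2 * β / ((d:ℝ) - 1)) * τ ^ β)
                (τ ^ (((d:ℝ) - 1) / 2)) := by
  classical
  have hd1 : (1:ℝ) ≤ (d:ℝ) - 1 := by
    have h2 : (2:ℝ) ≤ (d:ℝ) := by exact_mod_cast hd
    linarith
  set s : ℝ := (4:ℝ) ^ β / 2 ^ (d - 1) with hs_def
  have hs0 : 0 < s := by positivity
  have hs1 : s < 1 := ratio_lt_one hd hβ
  have h1s : 0 < 1 - s := by linarith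
  set C₁ : ℝ := 4 ^ β * (1 - s)⁻¹ with hC₁
  set C₂ : ℝ := 2 ^ (d - 1) * ((d.factorial : ℝ) / γ ^ d) * 2 with hC₂
  have hfac : (0:ℝ) < d.factorial := by exact_mod_cast d.factorial_pos
  have hC₁pos : 0 < C₁ := by rw [hC₁]; positivity
  have hC₂pos : 0 < C₂ := by
    rw [hC₂]
    apply mul_pos (mul_pos (pow_pos two_pos _) (div_pos hfac (pow_pos hγ d))) two_pos
  refine ⟨C₁ + C₂ + 1, by positivity, ?_⟩
  intro ω hω hΘ0 hΘtop hμtop x τ hτ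
  set ν : Measure (EuclideanSpace ℝ (Fin d)) := μH[(d:ℝ) - 1] with hν
  set θ : ℝ := (Theta d ω).toReal with hθdef
  have hΘne : Theta d ω ≠ ⊤ := hΘtop.ne
  have hθ0 : 0 < θ := ENNReal.toReal_pos hΘ0.ne' hΘne
  have hΘof : ENNReal.ofReal θ = Theta d ω := ENNReal.ofReal_toReal hΘne
  set m : ℝ := (ν ω).toReal with hmdef
  have hνω0 : ν ω ≠ 0 := by
    intro h0
    have hzero : Theta d ω ≤ 0 := by
      refine iSup_le fun r => iSup_le fun hr => iSup_le fun z => ?_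
      have hz : ν (ω ∩ ball z r) = 0 := measure_mono_null inter_subset_left h0
      simp [Theta, hν] at hz ⊢
      simp [hz]
    exact absurd hΘ0 (by simp [le_zero_iff.mp hzero])
  have hm0 : 0 < m := ENNReal.toReal_pos hνω0 hμtop.ne
  have hmν : ENNReal.ofReal m = ν ω := ENNReal.ofReal_toReal hμtop.ne
  set u : ℝ := m / θ with hu
  have hu0 : 0 < u := div_pos hm0 hθ0
  have hmeas : Measurable fun y : EuclideanSpace ℝ (Fin d) =>
      (‖x - y‖ ^ 2 / τ) ^ (-β) * Real.exp (-γ * ‖x - y‖ ^ 2 / τ) := by fun_prop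
  have hint : (∫ y in ω, (‖x - y‖ ^ 2 / τ) ^ (-β) * Real.exp (-γ * ‖x - y‖ ^ 2 / τ) ∂ν)
      = (∫⁻ y in ω, ENNReal.ofReal ((‖x - y‖ ^ 2 / τ) ^ (-β)
          * Real.exp (-γ * ‖x - y‖ ^ 2 / τ)) ∂ν).toReal := by
    rw [integral_eq_lintegral_of_nonneg_ae (ae_of_all _ fun y => by positivity)
      hmeas.aestronglyMeasurable]
  have key : ∀ b : ℝ, 0 ≤ b →
      (∫⁻ y in ω, ENNReal.ofReal ((‖x - y‖ ^ 2 / τ) ^ (-β)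
          * Real.exp (-γ * ‖x - y‖ ^ 2 / τ)) ∂ν) ≤ Theta d ω * ENNReal.ofReal b →
      (∫ y in ω, (‖x - y‖ ^ 2 / τ) ^ (-β) * Real.exp (-γ * ‖x - y‖ ^ 2 / τ) ∂ν) ≤ θ * b := by
    intro b hb hle
    rw [hint]
    refine ENNReal.toReal_le_of_le_ofReal (by positivity) ?_
    calc (∫⁻ y in ω, ENNReal.ofReal ((‖x - y‖ ^ 2 / τ) ^ (-β)
            * Real.exp (-γ * ‖x - y‖ ^ 2 / τ)) ∂ν)
        ≤ Theta d ω * ENNReal.ofReal b := hle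
      _ = ENNReal.ofReal (θ * b) := by rw [ENNReal.ofReal_mul hθ0.le, hΘof]
  -- bound 1 : τ ^ ((d-1)/2)
  have hq0 : 0 < Real.sqrt τ := Real.sqrt_pos.mpr hτ
  have hq2 : Real.sqrt τ ^ 2 = τ := Real.sq_sqrt hτ.le
  have hcast : ((d:ℝ) - 1) = ((d - 1 : ℕ) : ℝ) := by
    rw [Nat.cast_sub (by omega)]; norm_num
  have hq3 : Real.sqrt τ ^ (d - 1) = τ ^ (((d:ℝ) - 1) / 2) := by
    rw [← Real.rpow_natCast (Real.sqrt τ) (d - 1), Real.sqrt_eq_rpow, ← Real.rpow_mul hτ.le,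
      ← hcast]
    congr 1
    ring
  have hB1 : (∫⁻ y in ω, ENNReal.ofReal ((‖x - y‖ ^ 2 / τ) ^ (-β)
        * Real.exp (-γ * ‖x - y‖ ^ 2 / τ)) ∂ν) ≤
      Theta d ω * ENNReal.ofReal ((C₁ + C₂) * τ ^ (((d:ℝ) - 1) / 2)) := by
    calc (∫⁻ y in ω, ENNReal.ofReal ((‖x - y‖ ^ 2 / τ) ^ (-β)
            * Real.exp (-γ * ‖x - y‖ ^ 2 / τ)) ∂ν)
        = ∫⁻ y in (ω ∩ ball x (Real.sqrt τ)) ∪ (ω \ ball x (Real.sqrt τ)),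
            ENNReal.ofReal ((‖x - y‖ ^ 2 / τ) ^ (-β)
              * Real.exp (-γ * ‖x - y‖ ^ 2 / τ)) ∂ν := by
          rw [inter_union_diff]
      _ ≤ (∫⁻ y in ω ∩ ball x (Real.sqrt τ), ENNReal.ofReal ((‖x - y‖ ^ 2 / τ) ^ (-β)
              * Real.exp (-γ * ‖x - y‖ ^ 2 / τ)) ∂ν)
            + (∫⁻ y in ω \ ball x (Real.sqrt τ), ENNReal.ofReal ((‖x - y‖ ^ 2 / τ) ^ (-β)
              * Real.exp (-γ * ‖x - y‖ ^ 2 / τ)) ∂ν) := lintegral_union_le _ _ _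
      _ ≤ Theta d ω * ENNReal.ofReal (C₁ * ((τ / Real.sqrt τ ^ 2) ^ β
              * Real.sqrt τ ^ (d - 1)))
            + Theta d ω * ENNReal.ofReal (C₂ * Real.sqrt τ ^ (d - 1)) :=
          add_le_add (near_bound d hd β γ hβ0 hβ hγ ω hω x hτ hq0)
            (far_bound d hd β γ hβ0 hγ ω hω x hτ)
      _ = Theta d ω * ENNReal.ofReal ((C₁ + C₂) * τ ^ (((d:ℝ) - 1) / 2)) := by
          rw [hq2, div_self hτ.ne', Real.one_rpow, one_mul, hq3, ← mul_add,
            ← ENNReal.ofReal_add (mul_nonneg hC₁pos.le (by positivity))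
              (mul_nonneg hC₂pos.le (by positivity)), ← add_mul]
  -- bound 2
  set ρ : ℝ := u ^ (((d:ℝ) - 1)⁻¹) with hρ
  have hρ0 : 0 < ρ := Real.rpow_pos_of_pos hu0 _
  have hdne : ((d:ℝ) - 1) ≠ 0 := by linarith
  have hρd : ρ ^ (d - 1) = u := by
    rw [hρ, ← Real.rpow_natCast _ (d - 1), ← hcast, ← Real.rpow_mul hu0.le,
      inv_mul_cancel₀ hdne, Real.rpow_one]
  have hρ2 : ρ ^ (2:ℕ) = u ^ (2 * ((d:ℝ) - 1)⁻¹) := by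
    rw [hρ, ← Real.rpow_natCast (u ^ (((d:ℝ) - 1)⁻¹)) 2, ← Real.rpow_mul hu0.le]
    congr 1
    push_cast
    ring
  have hτρ : (τ / ρ ^ 2) ^ β = τ ^ β * u ^ (-(2 * β / ((d:ℝ) - 1))) := by
    rw [Real.div_rpow hτ.le (by positivity), hρ2, ← Real.rpow_mul hu0.le, div_eq_mul_inv,
      ← Real.rpow_neg hu0.le]
    congr 1
    ring
  have hb2 : u ^ (1 - 2 * β / ((d:ℝ) - 1)) = u * u ^ (-(2 * β / ((d:ℝ) - 1))) := by
    rw [show (1 - 2 * β / ((d:ℝ) - 1)) = 1 + (-(2 * β / ((d:ℝ) - 1))) by ring,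
      Real.rpow_add hu0, Real.rpow_one]
  have hXnn : 0 ≤ u ^ (1 - 2 * β / ((d:ℝ) - 1)) * τ ^ β := by positivity
  have hfar2 : (∫⁻ y in ω \ ball x ρ, ENNReal.ofReal ((‖x - y‖ ^ 2 / τ) ^ (-β)
        * Real.exp (-γ * ‖x - y‖ ^ 2 / τ)) ∂ν) ≤
      Theta d ω * ENNReal.ofReal (u ^ (1 - 2 * β / ((d:ℝ) - 1)) * τ ^ β) := by
    have hpt : ∀ y ∈ ω \ ball x ρ, (‖x - y‖ ^ 2 / τ) ^ (-β)
        * Real.exp (-γ * ‖x - y‖ ^ 2 / τ) ≤ (ρ ^ 2 / τ) ^ (-β) := by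
      intro y hy
      have hge : ρ ≤ ‖x - y‖ := by
        have h := hy.2
        rw [mem_ball, not_lt] at h
        rwa [dist_comm, dist_eq_norm] at h
      calc (‖x - y‖ ^ 2 / τ) ^ (-β) * Real.exp (-γ * ‖x - y‖ ^ 2 / τ)
          ≤ (ρ ^ 2 / τ) ^ (-β) * Real.exp (-γ * ρ ^ 2 / τ) := f_mono hβ0 hγ hτ hρ0 hge
        _ ≤ (ρ ^ 2 / τ) ^ (-β) * 1 := by
            refine mul_le_mul_of_nonneg_left ?_ (by positivity)
            rw [Real.exp_le_one_iff]
            apply div_nonpos_of_nonpos_of_nonneg _ hτ.le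
            nlinarith [sq_nonneg ρ]
        _ = (ρ ^ 2 / τ) ^ (-β) := mul_one _
    calc (∫⁻ y in ω \ ball x ρ, ENNReal.ofReal ((‖x - y‖ ^ 2 / τ) ^ (-β)
            * Real.exp (-γ * ‖x - y‖ ^ 2 / τ)) ∂ν)
        ≤ ENNReal.ofReal ((ρ ^ 2 / τ) ^ (-β)) * ν (ω \ ball x ρ) :=
          setLIntegral_ofReal_le ν (hω.diff measurableSet_ball) hpt
      _ ≤ ENNReal.ofReal ((ρ ^ 2 / τ) ^ (-β)) * ν ω :=
          mul_le_mul_right (measure_mono diff_subset) _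
      _ = ENNReal.ofReal ((ρ ^ 2 / τ) ^ (-β) * m) := by
          rw [← hmν, ← ENNReal.ofReal_mul (by positivity)]
      _ = Theta d ω * ENNReal.ofReal (u ^ (1 - 2 * β / ((d:ℝ) - 1)) * τ ^ β) := by
          rw [← hΘof, ← ENNReal.ofReal_mul hθ0.le]
          congr 1
          have h5 : ((ρ ^ 2 / τ) : ℝ) ^ (-β) = (τ / ρ ^ 2) ^ β := by
            rw [Real.rpow_neg (by positivity), ← Real.inv_rpow (by positivity), inv_div]
          rw [h5, hτρ, hb2, hu]
          field_simp
  have heq1 : C₁ * ((τ / ρ ^ 2) ^ β * ρ ^ (d - 1))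
      = C₁ * (u ^ (1 - 2 * β / ((d:ℝ) - 1)) * τ ^ β) := by
    rw [hτρ, hρd, hb2]
    ring
  have hB2 : (∫⁻ y in ω, ENNReal.ofReal ((‖x - y‖ ^ 2 / τ) ^ (-β)
        * Real.exp (-γ * ‖x - y‖ ^ 2 / τ)) ∂ν) ≤
      Theta d ω * ENNReal.ofReal ((C₁ + 1) * (u ^ (1 - 2 * β / ((d:ℝ) - 1)) * τ ^ β)) := by
    calc (∫⁻ y in ω, ENNReal.ofReal ((‖x - y‖ ^ 2 / τ) ^ (-β)
            * Real.exp (-γ * ‖x - y‖ ^ 2 / τ)) ∂ν)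
        = ∫⁻ y in (ω ∩ ball x ρ) ∪ (ω \ ball x ρ),
            ENNReal.ofReal ((‖x - y‖ ^ 2 / τ) ^ (-β)
              * Real.exp (-γ * ‖x - y‖ ^ 2 / τ)) ∂ν := by
          rw [inter_union_diff]
      _ ≤ (∫⁻ y in ω ∩ ball x ρ, ENNReal.ofReal ((‖x - y‖ ^ 2 / τ) ^ (-β)
              * Real.exp (-γ * ‖x - y‖ ^ 2 / τ)) ∂ν)
            + (∫⁻ y in ω \ ball x ρ, ENNReal.ofReal ((‖x - y‖ ^ 2 / τ) ^ (-β)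
              * Real.exp (-γ * ‖x - y‖ ^ 2 / τ)) ∂ν) := lintegral_union_le _ _ _
      _ ≤ Theta d ω * ENNReal.ofReal (C₁ * ((τ / ρ ^ 2) ^ β * ρ ^ (d - 1)))
            + Theta d ω * ENNReal.ofReal (u ^ (1 - 2 * β / ((d:ℝ) - 1)) * τ ^ β) :=
          add_le_add (near_bound d hd β γ hβ0 hβ hγ ω hω x hτ hρ0) hfar2
      _ = Theta d ω * ENNReal.ofReal ((C₁ + 1) * (u ^ (1 - 2 * β / ((d:ℝ) - 1)) * τ ^ β)) := by
          rw [heq1, ← mul_add, ← ENNReal.ofReal_add (mul_nonneg hC₁pos.le hXnn) hXnn]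
          congr 2
          ring
  -- combine
  rcases le_total (u ^ (1 - 2 * β / ((d:ℝ) - 1)) * τ ^ β) (τ ^ (((d:ℝ) - 1) / 2)) with hmin | hmin
  · rw [min_eq_left hmin]
    rw [show (C₁ + C₂ + 1) * θ * (u ^ (1 - 2 * β / ((d:ℝ) - 1)) * τ ^ β)
        = θ * ((C₁ + C₂ + 1) * (u ^ (1 - 2 * β / ((d:ℝ) - 1)) * τ ^ β)) from by ring]
    refine key _ (by positivity) (le_trans hB2 ?_)
    gcongr
    linarith
  · rw [min_eq_right hmin]
    rw [show (C₁ + C₂ + 1) * θ * τ ^ (((d:ℝ) - 1) / 2)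
        = θ * ((C₁ + C₂ + 1) * τ ^ (((d:ℝ) - 1) / 2)) from by ring]
    refine key _ (by positivity) (le_trans hB1 ?_)
    exact mul_le_mul_right (ENNReal.ofReal_le_ofReal
      (mul_le_mul_of_nonneg_right (by linarith) (by positivity))) _
end

section
/- Let d ≥ 2 and set κ_d := 1 if d = 2 and κ_d := 0 if d ≥ 3. For every δ > 0, ε ∈ (0, 1/2) and ε₀ ∈ (0, 1) there is a constant C depending only on d, δ, ε, ε₀ with the following property. For every x ∈ ℝ^d, R > 0 and t > 0, letting A := {z ∈ ℝ^d : (1−ε)R < |z − x| < R}, one has (1/R²) ∫₀^t ∫_A (t−s)^{−d/2} s^{−d/2} · exp( −|x−z|²/(4(1+δ)(t−s)) − |x−z|²/(4(1+δ)s) ) dz ds ≤ C · t^{−d/2} · (1 + log₊(√t / R))^{κ_d} · exp( −(1−ε)²(1−ε₀)·R² / ((1+δ)t) ). -/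
open MeasureTheory Metric Set

lemma aux_rpow_exp_le (p x : ℝ) (hp : 0 < p) (hx : 0 ≤ x) :
    x ^ p * Real.exp (-x) ≤ (2*p) ^ p := by
  rcases eq_or_lt_of_le hx with h | h
  · rw [← h, Real.zero_rpow hp.ne', zero_mul]
    positivity
  · have h2p : (0:ℝ) < 2*p := by linarith
    rw [Real.rpow_def_of_pos h, Real.rpow_def_of_pos h2p, ← Real.exp_add]
    apply Real.exp_le_exp.2
    have hx2p : 0 < x / (2*p) := by positivity
    have hlog : Real.log (x / (2*p)) ≤ x/(2*p) - 1 := Real.log_le_sub_one_of_pos hx2p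
    have hsplit : Real.log x = Real.log (2*p) + Real.log (x/(2*p)) := by
      rw [← Real.log_mul h2p.ne' (ne_of_gt hx2p)]
      congr 1
      field_simp
    have hmul := mul_le_mul_of_nonneg_left hlog hp.le
    have hxe : p * (x / (2*p)) = x/2 := by field_simp
    nlinarith [hmul, hsplit]

lemma aux_pointwise (p c s : ℝ) (hp : 0 < p) (hc : 0 < c) (hs : 0 < s) :
    s ^ (-p) * Real.exp (-(c/s)) ≤ (2*p)^p * c^(-p) := by
  have h1 := aux_rpow_exp_le p (c/s) hp (by positivity)
  have hcs : (c/s) ^ p = c ^ p * s ^ (-p) := by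
    rw [Real.div_rpow hc.le hs.le, Real.rpow_neg hs.le, div_eq_mul_inv]
  have hcp : (0:ℝ) < c ^ p := Real.rpow_pos_of_pos hc p
  rw [Real.rpow_neg hc.le, ← div_eq_mul_inv, le_div_iff₀ hcp]
  calc s ^ (-p) * Real.exp (-(c/s)) * c ^ p
      = (c/s) ^ p * Real.exp (-(c/s)) := by rw [hcs]; ring
    _ ≤ (2*p)^p := h1

lemma aux_meas (p c : ℝ) : Measurable (fun s : ℝ => s ^ (-p) * Real.exp (-(c/s))) := by
  fun_prop

lemma aux_integrableOn (p c τ : ℝ) (hp : 0 < p) (hc : 0 < c) :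
    IntegrableOn (fun s : ℝ => s ^ (-p) * Real.exp (-(c/s))) (Ioo (0:ℝ) τ) := by
  apply Integrable.mono' (g := fun _ : ℝ => (2*p)^p * c^(-p))
  · exact integrableOn_const measure_Ioo_lt_top.ne
  · exact (aux_meas p c).aestronglyMeasurable
  · filter_upwards [ae_restrict_mem measurableSet_Ioo] with s hs
    rw [Real.norm_of_nonneg (mul_nonneg (Real.rpow_nonneg hs.1.le _) (Real.exp_pos _).le)]
    exact aux_pointwise p c s hp hc hs.1

lemma aux_keyK (p c τ : ℝ) (hp : 1 ≤ p) (hc : 0 < c) (hτ : 0 < τ) :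
    ∫ s in Ioo (0:ℝ) τ, s ^ (-p) * Real.exp (-(c/s))
      ≤ (2*p)^p * c^(1-p)
        + (if p = 1 then max (Real.log (τ/c)) 0 else c^(1-p)/(p-1)) := by
  have hpos : (0:ℝ) < p := lt_of_lt_of_le one_pos hp
  set m : ℝ := min c τ with hm
  have hm0 : 0 < m := lt_min hc hτ
  have hmτ : m ≤ τ := min_le_right _ _
  have hmc : m ≤ c := min_le_left _ _
  have hiK := aux_integrableOn p c τ hpos hc
  have hunion : Ioo (0:ℝ) τ = Ioo 0 m ∪ Ico m τ := (Ioo_union_Ico_eq_Ioo hm0 hmτ).symm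
  have hdisj : Disjoint (Ioo (0:ℝ) m) (Ico m τ) :=
    Set.disjoint_left.2 fun x hx hx' => absurd hx.2 (not_lt.2 hx'.1)
  have hsub1 : Ioo (0:ℝ) m ⊆ Ioo 0 τ := Ioo_subset_Ioo le_rfl hmτ
  have hsub2 : Ico m τ ⊆ Ioo (0:ℝ) τ := fun x hx => ⟨lt_of_lt_of_le hm0 hx.1, hx.2⟩
  rw [hunion, setIntegral_union hdisj measurableSet_Ico (hiK.mono_set hsub1)
    (hiK.mono_set hsub2)]
  have part1 : ∫ s in Ioo (0:ℝ) m, s ^ (-p) * Real.exp (-(c/s)) ≤ (2*p)^p * c^(1-p) := by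
    have hb : ∀ s ∈ Ioo (0:ℝ) m, ‖s ^ (-p) * Real.exp (-(c/s))‖ ≤ (2*p)^p * c^(-p) := by
      intro s hs
      rw [Real.norm_of_nonneg (mul_nonneg (Real.rpow_nonneg hs.1.le _) (Real.exp_pos _).le)]
      exact aux_pointwise p c s hpos hc hs.1
    calc ∫ s in Ioo (0:ℝ) m, s ^ (-p) * Real.exp (-(c/s))
        ≤ ‖∫ s in Ioo (0:ℝ) m, s ^ (-p) * Real.exp (-(c/s))‖ := by rw [Real.norm_eq_abs]; exact le_abs_self _
      _ ≤ ((2*p)^p * c^(-p)) * (volume (Ioo (0:ℝ) m)).toReal :=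
          norm_setIntegral_le_of_norm_le_const measure_Ioo_lt_top hb
      _ ≤ ((2*p)^p * c^(-p)) * c := by
          rw [Real.volume_Ioo, sub_zero, ENNReal.toReal_ofReal hm0.le]
          exact mul_le_mul_of_nonneg_left hmc
            (mul_nonneg (Real.rpow_nonneg (by positivity) _) (Real.rpow_nonneg hc.le _))
      _ = (2*p)^p * c^(1-p) := by
          rw [show (1:ℝ)-p = -p + 1 by ring, Real.rpow_add hc, Real.rpow_one]; ring
  have part2 : ∫ s in Ico m τ, s ^ (-p) * Real.exp (-(c/s))
      ≤ (if p = 1 then max (Real.log (τ/c)) 0 else c^(1-p)/(p-1)) := by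
    rcases le_or_gt τ c with h | h
    · have : m = τ := min_eq_right h
      rw [this, Ico_self, setIntegral_empty]
      split
      · exact le_max_right _ _
      · rename_i hne
        have h1p : 1 < p := lt_of_le_of_ne hp (Ne.symm hne)
        exact div_nonneg (Real.rpow_nonneg hc.le _) (by linarith)
    · have hmceq : m = c := min_eq_left h.le
      rw [hmceq]
      have h0uIcc : (0:ℝ) ∉ Set.uIcc c τ := notMem_uIcc_of_lt hc hτ
      have hmono : ∫ s in Ico c τ, s ^ (-p) * Real.exp (-(c/s))
          ≤ ∫ s in Ico c τ, s ^ (-p) := by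
        apply setIntegral_mono_on
        · exact (hiK.mono_set (hmceq ▸ hsub2))
        · apply Integrable.mono' (g := fun _ : ℝ => c^(-p))
          · exact integrableOn_const measure_Ico_lt_top.ne
          · exact (measurable_id.pow_const _).aestronglyMeasurable.restrict
          · filter_upwards [ae_restrict_mem measurableSet_Ico] with s hs
            rw [Real.norm_of_nonneg (Real.rpow_nonneg (hc.trans_le hs.1).le _)]
            exact Real.rpow_le_rpow_of_nonpos hc hs.1 (neg_nonpos.2 hpos.le)
        · exact measurableSet_Ico
        · intro s hs
          nth_rewrite 2 [show s ^ (-p) = s ^ (-p) * 1 by ring]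
          apply mul_le_mul_of_nonneg_left _ (Real.rpow_nonneg (hc.trans_le hs.1).le _)
          exact Real.exp_le_one_iff.2 (neg_nonpos.2 (div_nonneg hc.le (hc.trans_le hs.1).le))
      have hIoo : ∫ s in Ico c τ, s ^ (-p) = ∫ s in c..τ, s ^ (-p) := by
        rw [integral_Ico_eq_integral_Ioo, intervalIntegral.integral_of_le h.le,
          integral_Ioc_eq_integral_Ioo]
      split
      · rename_i hp1
        subst hp1
        refine hmono.trans ?_
        rw [hIoo]
        have : ∫ s in c..τ, s ^ (-(1:ℝ)) = ∫ s in c..τ, s⁻¹ := by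
          congr 1; ext s; rw [Real.rpow_neg_one]
        rw [this, integral_inv h0uIcc]
        exact le_max_left _ _
      · rename_i hne
        have hp1 : 1 < p := lt_of_le_of_ne hp (Ne.symm hne)
        refine hmono.trans ?_
        rw [hIoo, integral_rpow (Or.inr ⟨by intro hcon; apply hne; linarith [neg_injective hcon], h0uIcc⟩)]
        have hτa : (0:ℝ) ≤ τ ^ (-p+1) := Real.rpow_nonneg hτ.le _
        have hb' : c ^ (-p+1) = c^(1-p) := by rw [show (-p+1 : ℝ) = 1-p by ring]
        have heq : (τ ^ (-p+1) - c ^ (-p+1)) / (-p+1) = (c^(1-p) - τ^(-p+1))/(p-1) := by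
          rw [hb', div_eq_div_iff (ne_of_lt (show -p+1 < 0 by linarith)) (ne_of_gt (show (0:ℝ) < p-1 by linarith))]
          ring
        rw [heq]
        gcongr
        · linarith
  exact add_le_add part1 part2

lemma logplus_mul (a b : ℝ) (ha : 0 < a) (hb : 0 < b) :
    max (Real.log (a*b)) 0 ≤ max (Real.log a) 0 + max (Real.log b) 0 := by
  rcases le_total (Real.log (a*b)) 0 with h|h
  · rw [max_eq_right h]
    exact add_nonneg (le_max_right _ _) (le_max_right _ _)
  · rw [max_eq_left h, Real.log_mul ha.ne' hb.ne']
    exact add_le_add (le_max_left _ _) (le_max_left _ _)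

lemma logplus_sq (y : ℝ) : max (Real.log (y^2)) 0 = 2 * max (Real.log y) 0 := by
  rw [Real.log_pow]
  push_cast
  rcases le_total (Real.log y) 0 with h|h
  · rw [max_eq_right h, max_eq_right (by linarith), mul_zero]
  · rw [max_eq_left h, max_eq_left (by linarith)]

noncomputable def ωb (d : ℕ) : ℝ :=
  (volume (ball (0 : EuclideanSpace ℝ (Fin d)) 1)).toReal

lemma aux_hT (b t s : ℝ) (hb : 0 ≤ b) (hs : 0 < s) (hst : s < t) :
    4*b/t ≤ b/(t-s) + b/s := by
  have hts : 0 < t - s := by linarith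
  have ht : 0 < t := by linarith
  rw [div_add_div _ _ (ne_of_gt hts) (ne_of_gt hs), div_le_div_iff₀ ht (by positivity)]
  nlinarith [mul_nonneg hb (sq_nonneg (t - 2*s))]

set_option maxHeartbeats 1000000 in
lemma aux_main (d : ℕ) (hd : 1 ≤ d) (p δ ε ε₀ : ℝ) (hpdef : p = (d:ℝ)/2) (hp : 1 ≤ p)
    (hδ : 0 < δ) (hε0 : 0 < ε) (hε1 : ε < 1/2) (hε₀0 : 0 < ε₀) (hε₀1 : ε₀ < 1)
    (x : EuclideanSpace ℝ (Fin d)) (R t c : ℝ) (hR : 0 < R) (ht : 0 < t)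
    (hcdef : c = ε₀ * (1-ε)^2 / (4*(1+δ)) * R^2) :
    (1 / R ^ 2) *
        (∫ s in Set.Ioo (0:ℝ) t,
          ∫ z in {z : EuclideanSpace ℝ (Fin d) |
              (1 - ε) * R < ‖z - x‖ ∧ ‖z - x‖ < R},
            (t - s) ^ (-(d:ℝ) / 2) * s ^ (-(d:ℝ) / 2) *
              Real.exp (-‖x - z‖ ^ 2 / (4 * (1 + δ) * (t - s))
                - ‖x - z‖ ^ 2 / (4 * (1 + δ) * s)))
      ≤ (1 / R ^ 2) * ((R^d * ωb d) *
          (Real.exp (-(1 - ε) ^ 2 * (1 - ε₀) * R ^ 2 / ((1 + δ) * t)) *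
            (2 * ((t/2)^(-p) *
              ((2*p)^p * c^(1-p) +
                (if p = 1 then max (Real.log (t/c)) 0 else c^(1-p)/(p-1))))))) := by
  have h1ε : (0:ℝ) < 1 - ε := by linarith
  have h1ε₀ : (0:ℝ) < 1 - ε₀ := by linarith
  have hδ1 : (0:ℝ) < 1 + δ := by linarith
  have hp0 : 0 < p := lt_of_lt_of_le one_pos hp
  have hc : 0 < c := by rw [hcdef]; positivity
  have hexpd : -(d:ℝ)/2 = -p := by rw [hpdef]; ring
  simp only [hexpd]
  set b : ℝ := (1-ε)^2 * R^2 / (4*(1+δ)) with hbdef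
  have hb : 0 < b := by positivity
  have hcb : c = ε₀ * b := by rw [hcdef, hbdef]; ring
  set A := {z : EuclideanSpace ℝ (Fin d) | (1-ε)*R < ‖z - x‖ ∧ ‖z - x‖ < R} with hAdef
  have hAopen : IsOpen A := by
    have : A = {z : EuclideanSpace ℝ (Fin d) | (1-ε)*R < ‖z - x‖} ∩
        {z | ‖z - x‖ < R} := rfl
    rw [this]
    exact (isOpen_lt continuous_const ((continuous_id.sub continuous_const).norm)).inter
      (isOpen_lt ((continuous_id.sub continuous_const).norm) continuous_const)
  have hAmeas := hAopen.measurableSet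
  have hAsub : A ⊆ ball x R := fun z hz => by
    rw [mem_ball, dist_eq_norm]; exact hz.2
  have hAlt : volume A < ⊤ := lt_of_le_of_lt (measure_mono hAsub) measure_ball_lt_top
  haveI : Nonempty (Fin d) := ⟨⟨0, hd⟩⟩
  haveI : Nontrivial (EuclideanSpace ℝ (Fin d)) := inferInstance
  set V : ℝ := R^d * ωb d with hVdef
  have hVnn : 0 ≤ V := mul_nonneg (pow_nonneg hR.le _) ENNReal.toReal_nonneg
  have hvolball : (volume (ball x R)).toReal = V := by
    rw [Measure.addHaar_ball volume x hR.le, finrank_euclideanSpace_fin, ENNReal.toReal_mul,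
      ENNReal.toReal_ofReal (pow_nonneg hR.le d)]
    rfl
  have hVA : (volume A).toReal ≤ V := by
    rw [← hvolball]
    exact ENNReal.toReal_mono measure_ball_lt_top.ne (measure_mono hAsub)
  set E' : ℝ := Real.exp (-(1-ε)^2*(1-ε₀)*R^2/((1+δ)*t)) with hE'def
  have hE'pos : 0 < E' := Real.exp_pos _
  set G : ℝ → ℝ := fun u => (t/2)^(-p) * (u^(-p) * Real.exp (-(c/u))) with hGdef
  have hGnn : ∀ u : ℝ, 0 < u → 0 ≤ G u := fun u hu =>
    mul_nonneg (Real.rpow_nonneg (by positivity) _)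
      (mul_nonneg (Real.rpow_nonneg hu.le _) (Real.exp_pos _).le)
  -- the key pointwise bound for the inner integral
  have key : ∀ s ∈ Ioo (0:ℝ) t,
      (∫ z in A, (t - s) ^ (-p) * s ^ (-p) *
          Real.exp (-‖x - z‖ ^ 2 / (4 * (1 + δ) * (t - s))
            - ‖x - z‖ ^ 2 / (4 * (1 + δ) * s)))
        ≤ V * (E' * (G s + G (t - s))) := by
    intro s hs
    obtain ⟨hs0, hst⟩ := hs
    have hts : 0 < t - s := by linarith
    set M : ℝ := (t-s)^(-p) * s^(-p) * Real.exp (-(b/(t-s)) - b/s) with hMdef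
    have hXnn : 0 ≤ (t-s)^(-p) * s^(-p) :=
      mul_nonneg (Real.rpow_nonneg hts.le _) (Real.rpow_nonneg hs0.le _)
    have step1 : (∫ z in A, (t - s) ^ (-p) * s ^ (-p) *
          Real.exp (-‖x - z‖ ^ 2 / (4 * (1 + δ) * (t - s))
            - ‖x - z‖ ^ 2 / (4 * (1 + δ) * s)))
        ≤ M * (volume A).toReal := by
      have hbound : ∀ z ∈ A, ‖(t - s) ^ (-p) * s ^ (-p) *
          Real.exp (-‖x - z‖ ^ 2 / (4 * (1 + δ) * (t - s))
            - ‖x - z‖ ^ 2 / (4 * (1 + δ) * s))‖ ≤ M := by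
        intro z hz
        rw [Real.norm_of_nonneg (mul_nonneg hXnn (Real.exp_pos _).le)]
        apply mul_le_mul_of_nonneg_left _ hXnn
        apply Real.exp_le_exp.2
        have hxz : (1-ε)*R ≤ ‖x - z‖ := by rw [norm_sub_rev]; exact hz.1.le
        have hxz2 : (1-ε)^2*R^2 ≤ ‖x-z‖^2 := by nlinarith [mul_pos h1ε hR]
        have hden1 : (0:ℝ) < 4 * (1 + δ) * (t - s) := by positivity
        have hden2 : (0:ℝ) < 4 * (1 + δ) * s := by positivity
        have h1 : b/(t-s) ≤ ‖x-z‖^2/(4*(1+δ)*(t-s)) := by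
          rw [hbdef, div_div]
          exact div_le_div_of_nonneg_right hxz2 hden1.le
        have h2 : b/s ≤ ‖x-z‖^2/(4*(1+δ)*s) := by
          rw [hbdef, div_div]
          exact div_le_div_of_nonneg_right hxz2 hden2.le
        have e1 : -‖x - z‖ ^ 2 / (4 * (1 + δ) * (t - s)) = -(‖x - z‖ ^ 2 / (4 * (1 + δ) * (t - s))) := by ring
        rw [e1]
        linarith
      have hmeasz : AEStronglyMeasurable (fun z : EuclideanSpace ℝ (Fin d) =>
          (t - s) ^ (-p) * s ^ (-p) *
            Real.exp (-‖x - z‖ ^ 2 / (4 * (1 + δ) * (t - s))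
              - ‖x - z‖ ^ 2 / (4 * (1 + δ) * s))) (volume.restrict A) := by
        apply Continuous.aestronglyMeasurable
        fun_prop
      calc (∫ z in A, (t - s) ^ (-p) * s ^ (-p) *
              Real.exp (-‖x - z‖ ^ 2 / (4 * (1 + δ) * (t - s))
                - ‖x - z‖ ^ 2 / (4 * (1 + δ) * s)))
          ≤ ‖(∫ z in A, (t - s) ^ (-p) * s ^ (-p) *
              Real.exp (-‖x - z‖ ^ 2 / (4 * (1 + δ) * (t - s))
                - ‖x - z‖ ^ 2 / (4 * (1 + δ) * s)))‖ := by
            rw [Real.norm_eq_abs]; exact le_abs_self _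
        _ ≤ M * (volume A).toReal :=
            norm_setIntegral_le_of_norm_le_const hAlt hbound
    have hM2 : M ≤ E' * (G s + G (t - s)) := by
      have hsplit : M = Real.exp (-((1-ε₀)*(b/(t-s)+b/s))) *
          ((t-s)^(-p) * s^(-p) * Real.exp (-(c/(t-s)) - c/s)) := by
        have hw : (-(b/(t-s)) - b/s)
            = (-((1-ε₀)*(b/(t-s)+b/s))) + (-(c/(t-s)) - c/s) := by rw [hcb]; ring
        rw [hMdef, hw, Real.exp_add]; ring
      have hT : 4*b/t ≤ b/(t-s) + b/s := aux_hT b t s hb.le hs0 hst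
      have hexp1 : Real.exp (-((1-ε₀)*(b/(t-s)+b/s))) ≤ E' := by
        rw [hE'def]
        apply Real.exp_le_exp.2
        have h4 : (1-ε₀)*(4*b/t) ≤ (1-ε₀)*(b/(t-s)+b/s) :=
          mul_le_mul_of_nonneg_left hT h1ε₀.le
        have harg : -(1-ε)^2*(1-ε₀)*R^2/((1+δ)*t) = -((1-ε₀)*(4*b/t)) := by
          rw [hbdef]; field_simp
        rw [harg]
        linarith
      have hexps : Real.exp (-(c/(t-s)) - c/s) =
          Real.exp (-(c/(t-s))) * Real.exp (-(c/s)) := by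
        rw [← Real.exp_add]; ring_nf
      have hsum : (t-s)^(-p) * s^(-p) * Real.exp (-(c/(t-s)) - c/s) ≤ G s + G (t-s) := by
        rcases le_or_gt s (t/2) with hhalf | hhalf
        · have hts2 : t/2 ≤ t - s := by linarith
          have hbase : (t-s)^(-p) ≤ (t/2)^(-p) :=
            Real.rpow_le_rpow_of_nonpos (by positivity) hts2 (neg_nonpos.2 hp0.le)
          have he1 : Real.exp (-(c/(t-s))) ≤ 1 :=
            Real.exp_le_one_iff.2 (neg_nonpos.2 (div_nonneg hc.le hts.le))
          calc (t-s)^(-p) * s^(-p) * Real.exp (-(c/(t-s)) - c/s)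
              = ((t-s)^(-p) * Real.exp (-(c/(t-s)))) * (s^(-p) * Real.exp (-(c/s))) := by
                rw [hexps]; ring
            _ ≤ ((t/2)^(-p) * 1) * (s^(-p) * Real.exp (-(c/s))) := by
                apply mul_le_mul_of_nonneg_right _
                  (mul_nonneg (Real.rpow_nonneg hs0.le _) (Real.exp_pos _).le)
                exact mul_le_mul hbase he1 (Real.exp_pos _).le
                  (Real.rpow_nonneg (by positivity) _)
            _ = G s := by rw [hGdef, mul_one]
            _ ≤ G s + G (t-s) := le_add_of_nonneg_right (hGnn _ hts)
        · have hbase : s^(-p) ≤ (t/2)^(-p) :=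
            Real.rpow_le_rpow_of_nonpos (by positivity) hhalf.le (neg_nonpos.2 hp0.le)
          have he1 : Real.exp (-(c/s)) ≤ 1 :=
            Real.exp_le_one_iff.2 (neg_nonpos.2 (div_nonneg hc.le hs0.le))
          calc (t-s)^(-p) * s^(-p) * Real.exp (-(c/(t-s)) - c/s)
              = ((t-s)^(-p) * Real.exp (-(c/(t-s)))) * (s^(-p) * Real.exp (-(c/s))) := by
                rw [hexps]; ring
            _ ≤ ((t-s)^(-p) * Real.exp (-(c/(t-s)))) * ((t/2)^(-p) * 1) := by
                apply mul_le_mul_of_nonneg_left _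
                  (mul_nonneg (Real.rpow_nonneg hts.le _) (Real.exp_pos _).le)
                exact mul_le_mul hbase he1 (Real.exp_pos _).le
                  (Real.rpow_nonneg (by positivity) _)
            _ = G (t-s) := by rw [hGdef, mul_one]; ring
            _ ≤ G s + G (t-s) := le_add_of_nonneg_left (hGnn _ hs0)
      calc M = Real.exp (-((1-ε₀)*(b/(t-s)+b/s))) *
            ((t-s)^(-p) * s^(-p) * Real.exp (-(c/(t-s)) - c/s)) := hsplit
        _ ≤ E' * (G s + G (t-s)) :=
            mul_le_mul hexp1 hsum
              (mul_nonneg hXnn (Real.exp_pos _).le) hE'pos.le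
    calc (∫ z in A, (t - s) ^ (-p) * s ^ (-p) *
            Real.exp (-‖x - z‖ ^ 2 / (4 * (1 + δ) * (t - s))
              - ‖x - z‖ ^ 2 / (4 * (1 + δ) * s)))
        ≤ M * (volume A).toReal := step1
      _ ≤ (E' * (G s + G (t - s))) * V := by
          apply mul_le_mul hM2 hVA ENNReal.toReal_nonneg
            (mul_nonneg hE'pos.le (by
              have := hGnn s ‹0 < s›
              have := hGnn (t-s) hts
              linarith))
      _ = V * (E' * (G s + G (t - s))) := mul_comm _ _
  -- integrability of the dominating function
  have hG1 : IntegrableOn G (Ioo (0:ℝ) t) := by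
    rw [hGdef]
    exact (aux_integrableOn p c t hp0 hc).const_mul _
  have hG2 : IntegrableOn (fun s => G (t - s)) (Ioo (0:ℝ) t) := by
    apply Integrable.mono' (g := fun _ : ℝ => (t/2)^(-p) * ((2*p)^p * c^(-p)))
    · exact integrableOn_const measure_Ioo_lt_top.ne
    · rw [hGdef]
      exact (((aux_meas p c).comp
        (measurable_const.sub measurable_id)).const_mul _).aestronglyMeasurable.restrict
    · filter_upwards [ae_restrict_mem measurableSet_Ioo] with s hs
      have hts : 0 < t - s := by linarith [hs.2]
      rw [Real.norm_of_nonneg (hGnn _ hts), hGdef]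
      exact mul_le_mul_of_nonneg_left (aux_pointwise p c (t-s) hp0 hc hts)
        (Real.rpow_nonneg (by positivity) _)
  have hInt : Integrable (fun s => V * (E' * (G s + G (t - s))))
      (volume.restrict (Ioo (0:ℝ) t)) := ((hG1.add hG2).const_mul E').const_mul V
  have hFnn : 0 ≤ᵐ[volume.restrict (Ioo (0:ℝ) t)] fun s =>
      (∫ z in A, (t - s) ^ (-p) * s ^ (-p) *
          Real.exp (-‖x - z‖ ^ 2 / (4 * (1 + δ) * (t - s))
            - ‖x - z‖ ^ 2 / (4 * (1 + δ) * s))) := by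
    filter_upwards [ae_restrict_mem measurableSet_Ioo] with s hs
    apply setIntegral_nonneg hAmeas
    intro z _
    exact mul_nonneg (mul_nonneg (Real.rpow_nonneg (by linarith [hs.2] : (0:ℝ) ≤ t - s) _)
      (Real.rpow_nonneg hs.1.le _)) (Real.exp_pos _).le
  have hmono : (∫ s in Ioo (0:ℝ) t,
      ∫ z in A, (t - s) ^ (-p) * s ^ (-p) *
          Real.exp (-‖x - z‖ ^ 2 / (4 * (1 + δ) * (t - s))
            - ‖x - z‖ ^ 2 / (4 * (1 + δ) * s)))
      ≤ ∫ s in Ioo (0:ℝ) t, V * (E' * (G s + G (t - s))) := by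
    apply integral_mono_of_nonneg hFnn hInt
    filter_upwards [ae_restrict_mem measurableSet_Ioo] with s hs
    exact key s hs
  have hrefl : (∫ s in Ioo (0:ℝ) t, G (t - s)) = ∫ s in Ioo (0:ℝ) t, G s := by
    rw [← integral_Ioc_eq_integral_Ioo, ← integral_Ioc_eq_integral_Ioo,
      ← intervalIntegral.integral_of_le ht.le, ← intervalIntegral.integral_of_le ht.le,
      intervalIntegral.integral_comp_sub_left G t]
    norm_num
  have hval : (∫ s in Ioo (0:ℝ) t, V * (E' * (G s + G (t - s))))
      = V * (E' * (2 * ((t/2)^(-p) *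
          (∫ s in Ioo (0:ℝ) t, s^(-p) * Real.exp (-(c/s)))))) := by
    rw [MeasureTheory.integral_const_mul, MeasureTheory.integral_const_mul, integral_add hG1 hG2, hrefl]
    have : (∫ s in Ioo (0:ℝ) t, G s)
        = (t/2)^(-p) * ∫ s in Ioo (0:ℝ) t, s^(-p) * Real.exp (-(c/s)) := by
      rw [hGdef, MeasureTheory.integral_const_mul]
    rw [this]
    ring
  calc (1 / R ^ 2) *
        (∫ s in Ioo (0:ℝ) t,
          ∫ z in A, (t - s) ^ (-p) * s ^ (-p) *
            Real.exp (-‖x - z‖ ^ 2 / (4 * (1 + δ) * (t - s))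
              - ‖x - z‖ ^ 2 / (4 * (1 + δ) * s)))
      ≤ (1 / R ^ 2) * (V * (E' * (2 * ((t/2)^(-p) *
          (∫ s in Ioo (0:ℝ) t, s^(-p) * Real.exp (-(c/s)))))))  := by
        rw [← hval]
        exact mul_le_mul_of_nonneg_left hmono (by positivity)
    _ ≤ (1 / R ^ 2) * (V *
          (E' * (2 * ((t/2)^(-p) *
            ((2*p)^p * c^(1-p) +
              (if p = 1 then max (Real.log (t/c)) 0 else c^(1-p)/(p-1))))))) := by
        apply mul_le_mul_of_nonneg_left _ (by positivity)
        apply mul_le_mul_of_nonneg_left _ hVnn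
        apply mul_le_mul_of_nonneg_left _ hE'pos.le
        apply mul_le_mul_of_nonneg_left _ (by norm_num)
        exact mul_le_mul_of_nonneg_left (aux_keyK p c t hp hc ht)
          (Real.rpow_nonneg (by positivity) _)

/-- The key convolution estimate from the proof of Proposition `improved bound bulk`: the
Duhamel double integral over the annulus `A = {(1−ε)R < |z−x| < R}` is bounded by
`C t^{−d/2} (1 + log₊(√t/R))^{κ_d} exp(−(1−ε)²(1−ε₀)R²/((1+δ)t))`, where `κ_d = 1` if `d = 2`
and `κ_d = 0` if `d ≥ 3`. -/
theorem stmt_19 (d : ℕ) (hd : 2 ≤ d) (δ ε ε₀ : ℝ) (hδ : 0 < δ)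
    (hε : ε ∈ Set.Ioo (0:ℝ) (1/2)) (hε₀ : ε₀ ∈ Set.Ioo (0:ℝ) 1) :
    ∃ C : ℝ, 0 < C ∧
      ∀ (x : EuclideanSpace ℝ (Fin d)) (R t : ℝ), 0 < R → 0 < t →
        (1 / R ^ 2) *
            (∫ s in Set.Ioo (0:ℝ) t,
              ∫ z in {z : EuclideanSpace ℝ (Fin d) |
                  (1 - ε) * R < ‖z - x‖ ∧ ‖z - x‖ < R},
                (t - s) ^ (-(d:ℝ) / 2) * s ^ (-(d:ℝ) / 2) *
                  Real.exp (-‖x - z‖ ^ 2 / (4 * (1 + δ) * (t - s))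
                    - ‖x - z‖ ^ 2 / (4 * (1 + δ) * s)))
          ≤ C * t ^ (-(d:ℝ) / 2)
              * (1 + max (Real.log (Real.sqrt t / R)) 0) ^ (if d = 2 then 1 else 0)
              * Real.exp (-(1 - ε) ^ 2 * (1 - ε₀) * R ^ 2 / ((1 + δ) * t)) := by
  obtain ⟨hε0, hε1⟩ := hε
  obtain ⟨hε₀0, hε₀1⟩ := hε₀
  have h1ε : (0:ℝ) < 1 - ε := by linarith
  have hδ1 : (0:ℝ) < 1 + δ := by linarith
  set p : ℝ := (d:ℝ)/2 with hpdef
  have hdR : (2:ℝ) ≤ (d:ℝ) := by exact_mod_cast hd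
  have hp1 : 1 ≤ p := by rw [hpdef]; linarith
  have hp0 : 0 < p := by linarith
  set γ : ℝ := ε₀ * (1-ε)^2 / (4*(1+δ)) with hγdef
  have hγ : 0 < γ := by rw [hγdef]; positivity
  have hωnn : 0 ≤ ωb d := ENNReal.toReal_nonneg
  have hωpos : 0 < ωb d :=
    ENNReal.toReal_pos (measure_ball_pos _ _ one_pos).ne' measure_ball_lt_top.ne
  refine ⟨if d = 2 then 4 * ωb d * (4 + max (Real.log γ⁻¹) 0)
    else 2^(p+1) * ωb d * ((2*p)^p + 1/(p-1)) * γ^(1-p), ?_, ?_⟩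
  · split
    · nlinarith [hωpos, le_max_right (Real.log γ⁻¹) (0:ℝ)]
    · rename_i hdne
      have hd3 : 3 ≤ d := by omega
      have hplt : 1 < p := by
        have : (3:ℝ) ≤ (d:ℝ) := by exact_mod_cast hd3
        rw [hpdef]; linarith
      have h1 : 0 < (2:ℝ)^(p+1) := Real.rpow_pos_of_pos two_pos _
      have h2 : 0 < (2*p)^p + 1/(p-1) :=
        add_pos (Real.rpow_pos_of_pos (by linarith) _) (div_pos one_pos (by linarith))
      have h3 : 0 < γ^(1-p) := Real.rpow_pos_of_pos hγ _
      exact mul_pos (mul_pos (mul_pos h1 hωpos) h2) h3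
  · intro x R t hR ht
    have hmain := aux_main d (by omega) p δ ε ε₀ hpdef hp1 hδ hε0 hε1 hε₀0 hε₀1 x R t
      (γ * R^2) hR ht (by rw [hγdef])
    refine hmain.trans ?_
    set m := max (Real.log (Real.sqrt t / R)) 0 with hmdef
    have hm0 : 0 ≤ m := le_max_right _ _
    set E' := Real.exp (-(1 - ε)^2 * (1 - ε₀) * R^2 / ((1 + δ) * t)) with hE'def
    have hE'pos : 0 < E' := Real.exp_pos _
    have hc : 0 < γ * R^2 := by positivity
    by_cases hcase : d = 2
    · -- d = 2
      rw [hcase]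
      have hpeq : p = 1 := by rw [hpdef, hcase]; norm_num
      rw [if_pos rfl, if_pos rfl]
      rw [hpeq]
      rw [if_pos rfl]
      set L := max (Real.log (t/(γ*R^2))) 0 with hLdef
      set g := max (Real.log γ⁻¹) 0 with hgdef
      have hg0 : 0 ≤ g := le_max_right _ _
      have hL0 : 0 ≤ L := le_max_right _ _
      have hlog : L ≤ g + 2*m := by
        have hsq : Real.sqrt t / R > 0 := by positivity
        have heq : t/(γ*R^2) = γ⁻¹ * ((Real.sqrt t / R)^2) := by
          rw [div_pow, Real.sq_sqrt ht.le]
          field_simp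
        rw [hLdef, heq]
        calc max (Real.log (γ⁻¹ * ((Real.sqrt t / R)^2))) 0
            ≤ max (Real.log γ⁻¹) 0 + max (Real.log ((Real.sqrt t / R)^2)) 0 :=
              logplus_mul _ _ (by positivity) (by positivity)
          _ = g + 2*m := by rw [logplus_sq]
      have key2 : 2 + L ≤ (4 + g) * (1 + m) := by nlinarith
      have hsimp1 : (2*(1:ℝ))^(1:ℝ) = 2 := by norm_num
      have hsimp2 : (γ*R^2)^((1:ℝ)-1) = 1 := by rw [sub_self, Real.rpow_zero]
      have hsimp3 : (t/2)^(-(1:ℝ)) = 2/t := by rw [Real.rpow_neg_one, inv_div]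
      have hsimp4 : t ^ (-((2:ℕ):ℝ)/2) = 1/t := by
        rw [show -((2:ℕ):ℝ)/2 = -1 by norm_num, Real.rpow_neg_one, one_div]
      rw [hsimp1, hsimp2, hsimp3, hsimp4, pow_one, mul_one]
      calc (1/R^2) * ((R^2 * ωb 2) * (E' * (2 * ((2/t) * (2 + L)))))
          = (4 * ωb 2 * E' * (1/t)) * (2 + L) * (R^2/R^2) := by ring
        _ = (4 * ωb 2 * E' * (1/t)) * (2 + L) := by
            rw [div_self (by positivity : (R:ℝ)^2 ≠ 0), mul_one]
        _ ≤ (4 * ωb 2 * E' * (1/t)) * ((4 + g) * (1 + m)) := by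
            apply mul_le_mul_of_nonneg_left key2
            exact mul_nonneg (mul_nonneg (mul_nonneg (by norm_num) (hcase ▸ hωnn))
              hE'pos.le) (one_div_nonneg.2 ht.le)
        _ = 4 * ωb 2 * (4 + g) * (1/t) * (1 + m) * E' := by ring
    · -- d ≥ 3
      have hd3 : 3 ≤ d := by omega
      have hplt : 1 < p := by
        have : (3:ℝ) ≤ (d:ℝ) := by exact_mod_cast hd3
        rw [hpdef]; linarith
      rw [if_neg hcase, if_neg hcase, if_neg hplt.ne', pow_zero, mul_one]
      have hexpd : -(d:ℝ)/2 = -p := by rw [hpdef]; ring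
      rw [hexpd]
      have hQ : (2*p)^p * ((γ*R^2):ℝ)^(1-p) + ((γ*R^2):ℝ)^(1-p)/(p-1)
          = ((2*p)^p + 1/(p-1)) * (γ*R^2)^(1-p) := by ring
      have hsplit : ((γ*R^2):ℝ)^((1:ℝ)-p) = γ^(1-p) * R^(2-(d:ℝ)) := by
        rw [Real.mul_rpow hγ.le (by positivity)]
        congr 1
        rw [← Real.rpow_natCast R 2, ← Real.rpow_mul hR.le]
        congr 1
        rw [hpdef]; push_cast; ring
      have hR2 : (R:ℝ)^d * R^(2-(d:ℝ)) = R^2 := by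
        rw [← Real.rpow_natCast R d, ← Real.rpow_add hR]
        rw [show (d:ℝ) + (2 - (d:ℝ)) = ((2:ℕ):ℝ) by push_cast; ring, Real.rpow_natCast]
      have ht2 : (t/2)^(-p) = 2^p * t^(-p) := by
        rw [Real.div_rpow ht.le (by norm_num), Real.rpow_neg (by norm_num : (0:ℝ) ≤ 2),
          div_eq_mul_inv, inv_inv]
        ring
      have h6 : 2 * (2:ℝ)^p = 2^(p+1) := by
        rw [Real.rpow_add two_pos, Real.rpow_one]; ring
      rw [hQ, hsplit, ht2]
      calc (1/R^2) * ((R^d * ωb d) * (E' * (2 * ((2^p * t^(-p)) *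
              (((2*p)^p + 1/(p-1)) * (γ^(1-p) * R^(2-(d:ℝ))))))))
          = ((ωb d * ((2*p)^p + 1/(p-1)) * γ^(1-p) * t^(-p) * E') * (2 * 2^p))
              * ((R^d * R^(2-(d:ℝ)))/R^2) := by ring
        _ = (2^(p+1) * ωb d * ((2*p)^p + 1/(p-1)) * γ^(1-p)) * t^(-p) * E' := by
            rw [hR2, div_self (by positivity : (R:ℝ)^2 ≠ 0), mul_one, h6]
            ring
        _ ≤ (2^(p+1) * ωb d * ((2*p)^p + 1/(p-1)) * γ^(1-p)) * t^(-p) * E' := le_refl _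
end
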